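/- arXiv:2510.22090 — 3 statements merged into one kernel-verified Lean document; each statement's English description precedes it below -/
import Mathlib

section
/- The mass M(b) = Σ|b_j|^2 and the Hamiltonian H(b) are conserved quantities for the toy model ODE system −i b_j' = −|b_j|^2 b_j + 2 b_{j-1}^2 conj(b_j) + 2 b_{j+1}^2 conj(b_j): if b(t) is a differentiable solution, then d/dt M(b(t)) = 0 and d/dt H(b(t)) = 0. -/
/-!
Both laws come from the structure `b_j' = i · G_j` with `G_j = -∂H/∂b̄_j`. For the mass,
`d/dt |b_j|² = 2⟪b_j, i G_j⟫` is a difference `4 (F_{j+1} - F_j)` of the fluxes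
`F_j = Im (b_{j-1}² conj(b_j)²)`, so the sum telescopes to boundary fluxes that vanish. For the
Hamiltonian, the chain rule (after shifting the index of the terms differentiated in `b_{j-1}`,
again at the cost of vanishing boundary terms) gives
`dH/dt = -2 Σ ⟪G_j, b_j'⟫ = -2 Σ ⟪G_j, i G_j⟫ = 0`.
-/

open ComplexConjugate Finset
open scoped InnerProductSpace

/-- The toy-model Hamiltonian. -/
noncomputable def toyH (N : ℕ) (b : ℤ → ℂ) : ℝ :=
  ∑ j ∈ Finset.Icc (-(N : ℤ)) (N : ℤ),
    ((1 / 2) * (‖b j‖) ^ 4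
      - 2 * ((((starRingEnd ℂ) (b j)) ^ 2 * (b (j - 1)) ^ 2).re))

/-- The mass `M(b) = Σ_{j=-N}^N |b_j|²`. -/
noncomputable def toyM (N : ℕ) (b : ℤ → ℂ) : ℝ :=
  ∑ j ∈ Finset.Icc (-(N : ℤ)) (N : ℤ), (‖b j‖) ^ 2

theorem Int.sum_Icc_sub {M : Type*} [AddCommGroup M] (f : ℤ → M) {a c : ℤ} (h : a ≤ c + 1) :
    ∑ i ∈ Icc a c, (f (i + 1) - f i) = f (c + 1) - f a := by
  rw [Int.Icc_eq_finset_map, sum_map]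
  have := sum_range_sub (fun i : ℕ => f (a + i)) (c + 1 - a).toNat
  simp only [Nat.cast_add, Nat.cast_one, ← add_assoc, Int.toNat_of_nonneg (sub_nonneg.2 h),
    add_sub_cancel] at this
  simpa [add_comm] using this

theorem HasDerivAt.re {f : ℝ → ℂ} {f' : ℂ} {x : ℝ} (h : HasDerivAt f f' x) :
    HasDerivAt (fun s => (f s).re) f'.re x :=
  Complex.reCLM.hasFDerivAt.comp_hasDerivAt x h

/-- The Wirtinger gradient `-∂H/∂b̄_j`, so that the toy model reads `b_j' = i · toyField b j`. -/
noncomputable def toyField (b : ℤ → ℂ) (j : ℤ) : ℂ :=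
  -(((‖b j‖ : ℝ)) : ℂ) ^ 2 * b j + 2 * (b (j - 1)) ^ 2 * conj (b j)
    + 2 * (b (j + 1)) ^ 2 * conj (b j)

theorem inner_I_mul_toyField (b : ℤ → ℂ) (j : ℤ) :
    ⟪b j, Complex.I * toyField b j⟫_ℝ =
      2 * ((b j ^ 2 * conj (b (j + 1)) ^ 2).im - (b (j - 1) ^ 2 * conj (b j) ^ 2).im) := by
  simp only [toyField, Complex.inner, Complex.mul_re, Complex.mul_im, Complex.add_re,
    Complex.add_im, Complex.neg_re, Complex.neg_im, Complex.conj_re, Complex.conj_im,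
    Complex.ofReal_re, Complex.ofReal_im, Complex.I_re, Complex.I_im, pow_two, Complex.re_ofNat,
    Complex.im_ofNat]
  ring

theorem sum_inner_I_mul_toyField_eq_zero {N : ℕ} {b : ℤ → ℂ} (hlow : b (-N - 1) = 0)
    (hhigh : b (N + 1) = 0) :
    ∑ j ∈ Icc (-(N : ℤ)) N, ⟪b j, Complex.I * toyField b j⟫_ℝ = 0 := by
  have htel := Int.sum_Icc_sub (fun k => (b (k - 1) ^ 2 * conj (b k) ^ 2).im) (a := -N) (c := N)
    (by omega)
  simp only [add_sub_cancel_right] at htel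
  rw [sum_congr rfl fun j _ => inner_I_mul_toyField b j, ← mul_sum, htel]
  simp [hlow, hhigh]

section
variable {N : ℕ} {b : ℝ → ℤ → ℂ} {d : ℤ → ℂ} {t : ℝ}

theorem hasDerivAt_toyM (hb : ∀ j, HasDerivAt (fun s => b s j) (d j) t) :
    HasDerivAt (fun s => toyM N (b s)) (∑ j ∈ Icc (-(N : ℤ)) N, 2 * ⟪b t j, d j⟫_ℝ) t :=
  HasDerivAt.fun_sum fun j _ => (hb j).norm_sq

theorem hasDerivAt_toyH (hb : ∀ j, HasDerivAt (fun s => b s j) (d j) t)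
    (hlow : b t (-N - 1) = 0) (hhigh : b t (N + 1) = 0) :
    HasDerivAt (fun s => toyH N (b s))
      (-2 * ∑ j ∈ Icc (-(N : ℤ)) N, ⟪toyField (b t) j, d j⟫_ℝ) t := by
  -- `h (j - 1)` is the part of the `j`-th summand's derivative coming from `b_{j-1}`; after the
  -- index shift it becomes the `b_{j+1}`-term of `toyField` at `j`.
  set h : ℤ → ℝ := fun k => ⟪d k, conj (b t k) * b t (k + 1) ^ 2⟫_ℝ
  have hterm : ∀ j, HasDerivAt
      (fun s => 1 / 2 * ‖b s j‖ ^ 4 - 2 * (conj (b s j) ^ 2 * b s (j - 1) ^ 2).re)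
      (-2 * ⟪toyField (b t) j, d j⟫_ℝ + 4 * (h j - h (j - 1))) t := by
    intro j
    have hquartic := ((hb j).norm_sq.fun_pow 2).const_mul (1 / 2 : ℝ)
    have hcoupling := ((((hb j).star.fun_pow 2).fun_mul ((hb (j - 1)).fun_pow 2)).re).const_mul 2
    have hsub := hquartic.fun_sub hcoupling
    simp only [Complex.star_def, ← pow_mul, Nat.cast_ofNat, Nat.reduceSub, Nat.reduceMul,
      pow_one] at hsub
    refine hsub.congr_deriv ?_
    simp only [h, toyField, ← Complex.ofReal_pow, Complex.sq_norm, Complex.normSq_apply]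
    simp only [Complex.inner, Complex.mul_re, Complex.mul_im, Complex.add_re, Complex.add_im,
      Complex.neg_re, Complex.neg_im, Complex.conj_re, Complex.conj_im, Complex.ofReal_re,
      Complex.ofReal_im, pow_two, Complex.re_ofNat, Complex.im_ofNat, sub_add_cancel]
    ring
  have hsum : HasDerivAt (fun s => toyH N (b s)) _ t := HasDerivAt.fun_sum fun j _ => hterm j
  have htel := Int.sum_Icc_sub (fun k => h (k - 1)) (a := -N) (c := N) (by omega)
  simp only [add_sub_cancel_right] at htel
  rw [sum_add_distrib, ← mul_sum, ← mul_sum, htel] at hsum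
  convert hsum using 1
  simp [h, hlow, hhigh]
end

/-- Mass and Hamiltonian are conserved along solutions of the toy model
`−i b_j' = −|b_j|² b_j + 2 b_{j-1}² conj(b_j) + 2 b_{j+1}² conj(b_j)`
(equivalently `b_j' = i (−|b_j|² b_j + 2 b_{j-1}² conj(b_j) + 2 b_{j+1}² conj(b_j))`)
with the boundary convention that `b` vanishes outside `[-N, N]`. -/
theorem toyM_toyH_conserved (N : ℕ) (b : ℝ → ℤ → ℂ)
    (hsupp : ∀ t : ℝ, ∀ j : ℤ, j ∉ Finset.Icc (-(N : ℤ)) (N : ℤ) → b t j = 0)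
    (hode : ∀ t : ℝ, ∀ j : ℤ, HasDerivAt (fun s => b s j)
      (Complex.I * (-(((‖b t j‖ : ℝ)) : ℂ) ^ 2 * b t j
        + 2 * (b t (j - 1)) ^ 2 * (starRingEnd ℂ) (b t j)
        + 2 * (b t (j + 1)) ^ 2 * (starRingEnd ℂ) (b t j))) t) :
    ∀ t : ℝ,
      HasDerivAt (fun s => toyM N (b s)) 0 t ∧ HasDerivAt (fun s => toyH N (b s)) 0 t := by
  intro t
  have hlow : b t (-N - 1) = 0 := hsupp t _ (by simp)
  have hhigh : b t (N + 1) = 0 := hsupp t _ (by simp)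
  have hb : ∀ j, HasDerivAt (fun s => b s j) (Complex.I * toyField (b t) j) t := hode t
  refine ⟨(hasDerivAt_toyM hb).congr_deriv ?_, (hasDerivAt_toyH hb hlow hhigh).congr_deriv ?_⟩
  · rw [← mul_sum, sum_inner_I_mul_toyField_eq_zero hlow hhigh, mul_zero]
  · simp [Complex.inner, mul_comm]
end

section
/- For any b ∈ ℂ^{2N+1}, the Hamiltonian satisfies the lower bound H(b) ≥ −(7/22) M(b)^2, and this bound is attained: there exists b with M(b) = 1 and H(b) = −7/22. -/
/-!
Replacing each `b_j` by `x_j = |b_j|²` can only lower `H`, since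
`Re (conj b_j² b_{j-1}²) ≤ x_j x_{j-1}`; this turns the problem into minimising the quadratic
energy `Σ (x_j²/2 - 2 x_j x_{j-1})` over nonnegative `x` of fixed mass `Σ x_j`. That real problem
is solved by dynamic programming from the right: the explicit value function `chainValue`
satisfies the Bellman inequality, and peeling off one site at a time gives
`-(7/22) m² = chainValue 0 m ≤ energy`. The value is attained by `x = (3, 5, 3)/11`, i.e. by
`b = (√(3/11), √(5/11), √(3/11))`.
-/

open Finset ComplexConjugate

/-- `chainValue c m` is the least energy `Σ (x_j²/2 - 2 x_j x_{j-1})` of a nonnegative chain of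
mass `m` whose left neighbour is `c`: the optimal chain occupies three, two or one sites
according as `10 c ≤ 3 m`, `2 c ≤ 3 m` or neither. -/
noncomputable def chainValue (c m : ℝ) : ℝ :=
  if 10 * c ≤ 3 * m then -(7 / 22) * m ^ 2 - (6 / 11) * (c * m) - (12 / 11) * c ^ 2
  else if 2 * c ≤ 3 * m then -(1 / 4) * m ^ 2 - c * m - (1 / 3) * c ^ 2
  else (1 / 2) * m ^ 2 - 2 * (c * m)

theorem chainValue_zero_left {m : ℝ} (hm : 0 ≤ m) : chainValue 0 m = -(7 / 22) * m ^ 2 := by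
  rw [chainValue, if_pos (by linarith)]
  ring

theorem chainValue_zero_right_nonpos (c : ℝ) : chainValue c 0 ≤ 0 := by
  unfold chainValue
  split_ifs <;> nlinarith [sq_nonneg c]

theorem chainValue_le_step {b c m : ℝ} (hb : 0 ≤ b) (hc : 0 ≤ c) (hbm : b ≤ m) :
    chainValue c m ≤ b ^ 2 / 2 - 2 * (b * c) + chainValue b (m - b) := by
  unfold chainValue
  -- `11 b = 12 c + 3 m` and `6 b = 2 c + 3 m` are the optimal first sites in the three- and
  -- two-site regimes.
  split_ifs <;> nlinarith [mul_nonneg hb hc, sq_nonneg (11 * b - 12 * c - 3 * m),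
    sq_nonneg (6 * b - 2 * c - 3 * m)]

noncomputable def chainEnergy (a b : ℤ) (x : ℤ → ℝ) : ℝ :=
  ∑ j ∈ Icc a b, (x j ^ 2 / 2 - 2 * (x j * x (j - 1)))

theorem chainValue_le_chainEnergy {x : ℤ → ℝ} (hx : ∀ j, 0 ≤ x j) {a b : ℤ} (hab : a ≤ b + 1) :
    chainValue (x (a - 1)) (∑ j ∈ Icc a b, x j) ≤ chainEnergy a b x := by
  induction a, hab using Int.leInductionDown with
  | base =>
    simpa [chainEnergy] using chainValue_zero_right_nonpos (x (b + 1 - 1))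
  | pred a hab ih =>
    have hIcc : Icc (a - 1) b = insert (a - 1) (Icc a b) := by
      rw [← insert_Icc_add_one_left_eq_Icc (by omega), sub_add_cancel]
    have hnotMem : a - 1 ∉ Icc a b := by simp
    have hmass : x (a - 1) ≤ x (a - 1) + ∑ j ∈ Icc a b, x j :=
      le_add_of_nonneg_right (sum_nonneg fun j _ => hx j)
    have hstep := chainValue_le_step (hx (a - 1)) (hx (a - 1 - 1)) hmass
    rw [add_sub_cancel_left] at hstep
    rw [chainEnergy] at ih ⊢
    rw [hIcc, sum_insert hnotMem, sum_insert hnotMem]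
    linarith

theorem neg_mul_sq_sum_le_chainEnergy {x : ℤ → ℝ} (hx : ∀ j, 0 ≤ x j) {a b : ℤ}
    (hab : a ≤ b + 1) (hleft : x (a - 1) = 0) :
    -(7 / 22) * (∑ j ∈ Icc a b, x j) ^ 2 ≤ chainEnergy a b x := by
  have h := chainValue_le_chainEnergy hx hab
  rwa [hleft, chainValue_zero_left (sum_nonneg fun j _ => hx j)] at h

theorem re_conj_sq_mul_sq_le (z w : ℂ) : (conj z ^ 2 * w ^ 2).re ≤ ‖z‖ ^ 2 * ‖w‖ ^ 2 :=
  (Complex.re_le_norm _).trans_eq (by simp)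

theorem chainEnergy_normSq_le_toyH (N : ℕ) (b : ℤ → ℂ) :
    chainEnergy (-N) N (fun j => ‖b j‖ ^ 2) ≤ toyH N b := by
  refine sum_le_sum fun j _ => ?_
  have hre := re_conj_sq_mul_sq_le (b j) (b (j - 1))
  have hpow : (‖b j‖ ^ 2) ^ 2 = ‖b j‖ ^ 4 := by ring
  linarith

theorem toyM_ofReal_sqrt (N : ℕ) {x : ℤ → ℝ} (hx : ∀ j, 0 ≤ x j) :
    toyM N (fun j => (√(x j) : ℂ)) = ∑ j ∈ Icc (-(N : ℤ)) N, x j := by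
  simp [toyM, hx]

theorem toyH_ofReal_sqrt (N : ℕ) {x : ℤ → ℝ} (hx : ∀ j, 0 ≤ x j) :
    toyH N (fun j => (√(x j) : ℂ)) = chainEnergy (-N) N x := by
  refine sum_congr rfl fun j _ => ?_
  have hsq : ∀ i, √(x i) ^ 2 = x i := fun i => Real.sq_sqrt (hx i)
  simp only [Complex.conj_ofReal, ← Complex.ofReal_pow, ← Complex.ofReal_mul, Complex.ofReal_re,
    Complex.norm_real, Real.norm_eq_abs, abs_of_nonneg (Real.sqrt_nonneg _), hsq]
  rw [show √(x j) ^ 4 = (√(x j) ^ 2) ^ 2 by ring, hsq]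
  ring

noncomputable def threeMode (j : ℤ) : ℝ :=
  if j = 0 then 5 / 11 else if j = 1 ∨ j = -1 then 3 / 11 else 0

theorem threeMode_nonneg (j : ℤ) : 0 ≤ threeMode j := by
  unfold threeMode
  split_ifs <;> norm_num

theorem threeMode_eq_zero {j : ℤ} (hj : j ∉ Icc (-1 : ℤ) 1) : threeMode j = 0 := by
  rw [mem_Icc] at hj
  rw [threeMode, if_neg (by omega), if_neg (by omega)]

theorem sum_Icc_eq_of_eq_zero_outside {N : ℕ} (hN : 1 ≤ N) {f : ℤ → ℝ}
    (hf : ∀ j ∉ Icc (-1 : ℤ) 1, f j = 0) :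
    ∑ j ∈ Icc (-(N : ℤ)) N, f j = f (-1) + f 0 + f 1 := by
  rw [← sum_subset (Icc_subset_Icc (by omega) (by omega)) fun j _ hj => hf j hj]
  simp [show Icc (-1 : ℤ) 1 = {-1, 0, 1} by decide, add_assoc]

theorem sum_threeMode {N : ℕ} (hN : 1 ≤ N) : ∑ j ∈ Icc (-(N : ℤ)) N, threeMode j = 1 := by
  rw [sum_Icc_eq_of_eq_zero_outside hN fun j hj => threeMode_eq_zero hj]
  norm_num [threeMode]

theorem chainEnergy_threeMode {N : ℕ} (hN : 1 ≤ N) : chainEnergy (-N) N threeMode = -(7 / 22) := by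
  rw [chainEnergy, sum_Icc_eq_of_eq_zero_outside hN fun j hj => by simp [threeMode_eq_zero hj]]
  norm_num [threeMode]

/-- Sharp lower bound: `H(b) ≥ −(7/22) M(b)²`, with equality attained at a mass-one state. -/
theorem toyH_lower_bound (N : ℕ) (hN : 2 ≤ N) :
    (∀ b : ℤ → ℂ, (∀ j : ℤ, j ∉ Finset.Icc (-(N : ℤ)) (N : ℤ) → b j = 0) →
      -(7 / 22) * (toyM N b) ^ 2 ≤ toyH N b) ∧
    (∃ b : ℤ → ℂ, (∀ j : ℤ, j ∉ Finset.Icc (-(N : ℤ)) (N : ℤ) → b j = 0) ∧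
      toyM N b = 1 ∧ toyH N b = -(7 / 22)) := by
  refine ⟨fun b hb => ?_, fun j => (√(threeMode j) : ℂ), fun j hj => ?_, ?_, ?_⟩
  · have hleft : b (-N - 1) = 0 := hb _ (by simp)
    calc -(7 / 22) * toyM N b ^ 2 ≤ chainEnergy (-N) N (fun j => ‖b j‖ ^ 2) :=
          neg_mul_sq_sum_le_chainEnergy (fun j => sq_nonneg _) (by omega) (by simp [hleft])
      _ ≤ toyH N b := chainEnergy_normSq_le_toyH N b
  · simp [threeMode_eq_zero fun h => hj (Icc_subset_Icc (by omega) (by omega) h)]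
  · rw [toyM_ofReal_sqrt N threeMode_nonneg, sum_threeMode (by omega)]
  · rw [toyH_ofReal_sqrt N threeMode_nonneg, chainEnergy_threeMode (by omega)]
end

section
/- Among nonnegative sequences ρ supported on the three sites {−1,0,1} with total mass Σρ_j = 1, the in-phase energy H(ρ) = ½(ρ_{-1}² + ρ_0² + ρ_1²) − 2(ρ_{-1} + ρ_1)ρ_0 is uniquely minimized by ρ_{-1} = ρ_1 = 3/11, ρ_0 = 5/11, with minimum value −7/22. -/
/-- Among nonnegative 3-mode configurations of mass 1, the in-phase energy
`H = ½(ρ₋₁²+ρ₀²+ρ₁²) − 2ρ₋₁ρ₀ − 2ρ₀ρ₁` is uniquely minimized at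
`(3/11, 5/11, 3/11)` with value `−7/22`. -/
theorem threeMode_min (a b c : ℝ) (ha : 0 ≤ a) (hb : 0 ≤ b) (hc : 0 ≤ c)
    (hsum : a + b + c = 1) :
    -(7 / 22) ≤ (1 / 2) * (a ^ 2 + b ^ 2 + c ^ 2) - 2 * a * b - 2 * b * c ∧
    ((1 / 2) * (a ^ 2 + b ^ 2 + c ^ 2) - 2 * a * b - 2 * b * c = -(7 / 22) ↔
      a = 3 / 11 ∧ b = 5 / 11 ∧ c = 3 / 11) := by
  have hc' : c = 1 - a - b := by linarith
  subst hc'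
  have key : (1 / 2) * (a ^ 2 + b ^ 2 + (1 - a - b) ^ 2) - 2 * a * b - 2 * b * (1 - a - b)
      = (11/4) * (b - 5/11)^2 + (a - (1 - a - b))^2/4 - 7/22 := by ring
  rw [key]
  constructor
  · nlinarith [sq_nonneg (b - 5/11), sq_nonneg (a - (1 - a - b))]
  constructor
  · intro h
    have h1 : (b - 5/11)^2 = 0 := by
      nlinarith [sq_nonneg (b - 5/11), sq_nonneg (a - (1 - a - b))]
    have h2 : (a - (1 - a - b))^2 = 0 := by
      nlinarith [sq_nonneg (b - 5/11), sq_nonneg (a - (1 - a - b))]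
    have hb5 : b = 5/11 := by nlinarith [pow_eq_zero_iff (n := 2) (by norm_num) |>.mp h1]
    have : a - (1 - a - b) = 0 := pow_eq_zero_iff (n := 2) (by norm_num) |>.mp h2
    refine ⟨by linarith, hb5, by linarith⟩
  · rintro ⟨ha', hb', hc'⟩
    subst ha' hb'
    norm_num
end
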